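/- Let Π ∈ ℂ^{m×n} have full column rank, with SVD Π = U₁ Σ V^H + U₂·0 (so U₁ ∈ ℂ^{m×n}, U₂ ∈ ℂ^{m×(m−n)}, [U₁ U₂] unitary, Σ positive diagonal, V unitary). Write Π_r, Π_j for real/imaginary parts of Π and U_{2r}, U_{2j} for those of U₂. Then I_m − [Π_r −Π_j]·([[Π_r, −Π_j],[Π_j, Π_r]]ᵀ·[[Π_r, −Π_j],[Π_j, Π_r]])⁻¹·[Π_r −Π_j]ᵀ = [U_{2r} U_{2j}]·[U_{2r} U_{2j}]ᵀ. -/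

import Mathlib

/-!
Entrywise, `a + b i ↦ [[a, -b], [b, a]]` turns complex matrices into real ones multiplicatively
and sends `Xᴴ` to the transpose. Hence the left-hand side is `I` minus the real part of the
complex projector `P (Pᴴ P)⁻¹ Pᴴ`. Since `P = U₁ (Σ Vᴴ)` with `U₁ᴴ U₁ = I` and `Σ Vᴴ` invertible,
this projector is `U₁ U₁ᴴ = I - U₂ U₂ᴴ`, and the real part of `U₂ U₂ᴴ` is
`U₂r U₂rᵀ + U₂j U₂jᵀ`.
-/

open Matrix

namespace Matrix

open Complex (re im)

variable {l m n : Type*}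

/-- The orthogonal projector onto the column space of `X` (when `Xᴴ * X` is invertible). -/
noncomputable def rangeProj {R : Type*} [CommRing R] [StarRing R] [Fintype m] [Fintype n] [DecidableEq n]
    (X : Matrix m n R) : Matrix m m R :=
  X * (Xᴴ * X)⁻¹ * Xᴴ

section Projection

variable {R : Type*} [CommRing R] [StarRing R] [Fintype m] [Fintype n] [DecidableEq n]
  {U : Matrix m n R} {B : Matrix n n R}

lemma conjTranspose_mul_self_mul_right (hU : Uᴴ * U = 1) :
    (U * B)ᴴ * (U * B) = Bᴴ * B := by
  rw [conjTranspose_mul, Matrix.mul_assoc, ← Matrix.mul_assoc Uᴴ, hU, Matrix.one_mul]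

lemma rangeProj_mul (hU : Uᴴ * U = 1) (hB : IsUnit B.det) : rangeProj (U * B) = U * Uᴴ := by
  have hBH : IsUnit Bᴴ.det := by rw [det_conjTranspose]; exact hB.star
  calc rangeProj (U * B)
      = U * (B * B⁻¹) * (Bᴴ⁻¹ * Bᴴ) * Uᴴ := by
        rw [rangeProj, conjTranspose_mul_self_mul_right hU, mul_inv_rev, conjTranspose_mul]
        simp only [Matrix.mul_assoc]
    _ = U * Uᴴ := by
        rw [mul_nonsing_inv B hB, nonsing_inv_mul Bᴴ hBH, Matrix.mul_one, Matrix.mul_one]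

end Projection

section RealRepresentation

lemma map_re_mul [Fintype m] (X : Matrix l m ℂ) (Y : Matrix m n ℂ) :
    (X * Y).map re = X.map re * Y.map re - X.map im * Y.map im := by
  ext i j
  simp [mul_apply, Finset.sum_sub_distrib]

lemma map_im_mul [Fintype m] (X : Matrix l m ℂ) (Y : Matrix m n ℂ) :
    (X * Y).map im = X.map re * Y.map im + X.map im * Y.map re := by
  ext i j
  simp [mul_apply, Finset.sum_add_distrib]

lemma map_re_conjTranspose (X : Matrix m n ℂ) : Xᴴ.map re = (X.map re)ᵀ := by
  ext i j
  simp

lemma map_im_conjTranspose (X : Matrix m n ℂ) : Xᴴ.map im = -(X.map im)ᵀ := by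
  ext i j
  simp

lemma map_re_mul_conjTranspose [Fintype m] (X : Matrix l m ℂ) (Y : Matrix n m ℂ) :
    (X * Yᴴ).map re = X.map re * (Y.map re)ᵀ + X.map im * (Y.map im)ᵀ := by
  rw [map_re_mul, map_re_conjTranspose, map_im_conjTranspose, Matrix.mul_neg, sub_neg_eq_add]

/-- The real representation `a + b i ↦ [[a, -b], [b, a]]`, applied entrywise. -/
def realRep (X : Matrix m n ℂ) : Matrix (m ⊕ m) (n ⊕ n) ℝ :=
  fromBlocks (X.map re) (-X.map im) (X.map im) (X.map re)

lemma realRep_mul [Fintype m] (X : Matrix l m ℂ) (Y : Matrix m n ℂ) :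
    realRep (X * Y) = realRep X * realRep Y := by
  simp only [realRep, fromBlocks_multiply, map_re_mul, map_im_mul, Matrix.neg_mul,
    Matrix.mul_neg, neg_add]
  congr 1 <;> abel

lemma realRep_one [DecidableEq m] : realRep (1 : Matrix m m ℂ) = 1 := by
  ext (i | i) (j | j) <;> simp [realRep, one_apply, apply_ite]

lemma realRep_conjTranspose (X : Matrix m n ℂ) : realRep Xᴴ = (realRep X)ᵀ := by
  simp [realRep, fromBlocks_transpose, map_re_conjTranspose, map_im_conjTranspose]

lemma realRep_inv [Fintype m] [DecidableEq m] (X : Matrix m m ℂ) (hX : IsUnit X.det) :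
    realRep X⁻¹ = (realRep X)⁻¹ :=
  (inv_eq_right_inv (by rw [← realRep_mul, mul_nonsing_inv X hX, realRep_one])).symm

lemma fromCols_mul_realRep [Fintype m] (X : Matrix l m ℂ) (Y : Matrix m n ℂ) :
    fromCols (X.map re) (-X.map im) * realRep Y =
      fromCols ((X * Y).map re) (-(X * Y).map im) := by
  simp only [realRep, fromCols_mul_fromBlocks, map_re_mul, map_im_mul, Matrix.neg_mul,
    Matrix.mul_neg, neg_add, sub_eq_add_neg]

lemma fromCols_mul_transpose_fromCols [Fintype m] (X : Matrix l m ℂ) (Y : Matrix n m ℂ) :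
    fromCols (X.map re) (-X.map im) * (fromCols (Y.map re) (-Y.map im))ᵀ = (X * Yᴴ).map re := by
  rw [transpose_fromCols, fromCols_mul_fromRows, map_re_mul_conjTranspose, transpose_neg,
    Matrix.neg_mul, Matrix.mul_neg, neg_neg]

lemma map_re_rangeProj [Fintype m] [Fintype n] [DecidableEq n] (X : Matrix m n ℂ)
    (hX : IsUnit (Xᴴ * X).det) :
    (rangeProj X).map re = fromCols (X.map re) (-X.map im) *
      ((realRep X)ᵀ * realRep X)⁻¹ * (fromCols (X.map re) (-X.map im))ᵀ := by
  rw [← realRep_conjTranspose, ← realRep_mul, ← realRep_inv _ hX, fromCols_mul_realRep,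
    fromCols_mul_transpose_fromCols, rangeProj]

end RealRepresentation

end Matrix

theorem stmt_10_general {m n k : ℕ} (P : Matrix (Fin m) (Fin n) ℂ)
    (U1 : Matrix (Fin m) (Fin n) ℂ) (U2 : Matrix (Fin m) (Fin k) ℂ)
    (hU : Matrix.fromCols U1 U2 * (Matrix.fromCols U1 U2)ᴴ = 1)
    (hU' : (Matrix.fromCols U1 U2)ᴴ * Matrix.fromCols U1 U2 = 1)
    (d : Fin n → ℝ) (hd : ∀ i, 0 < d i)
    (V : Matrix (Fin n) (Fin n) ℂ) (hV : Vᴴ * V = 1)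
    (hSVD : P = U1 * Matrix.diagonal (fun i => (d i : ℂ)) * Vᴴ)
    (Pr Pj : Matrix (Fin m) (Fin n) ℝ)
    (hP : ∀ i j, P i j = ⟨Pr i j, Pj i j⟩)
    (U2r U2j : Matrix (Fin m) (Fin k) ℝ)
    (hU2 : ∀ i j, U2 i j = ⟨U2r i j, U2j i j⟩) :
    (1 : Matrix (Fin m) (Fin m) ℝ) -
        Matrix.fromCols Pr (-Pj) *
          ((Matrix.fromBlocks Pr (-Pj) Pj Pr)ᵀ *
              Matrix.fromBlocks Pr (-Pj) Pj Pr)⁻¹ *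
          (Matrix.fromCols Pr (-Pj))ᵀ =
      Matrix.fromCols U2r U2j * (Matrix.fromCols U2r U2j)ᵀ := by
  obtain ⟨rfl, rfl⟩ : Pr = P.map Complex.re ∧ Pj = P.map Complex.im :=
    ⟨by ext; simp [hP], by ext; simp [hP]⟩
  obtain ⟨rfl, rfl⟩ : U2r = U2.map Complex.re ∧ U2j = U2.map Complex.im :=
    ⟨by ext; simp [hU2], by ext; simp [hU2]⟩
  have hU1 : U1ᴴ * U1 = 1 := by
    rw [conjTranspose_fromCols_eq_fromRows_conjTranspose, fromRows_mul_fromCols,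
      ← fromBlocks_one] at hU'
    exact (fromBlocks_inj.mp hU').1
  have hUU : U1 * U1ᴴ + U2 * U2ᴴ = 1 := by
    rwa [conjTranspose_fromCols_eq_fromRows_conjTranspose, fromCols_mul_fromRows] at hU
  set B := diagonal (fun i => (d i : ℂ)) * Vᴴ
  have hB : IsUnit B.det := by
    rw [det_mul, det_diagonal]
    refine (IsUnit.mk0 _ (Finset.prod_ne_zero_iff.mpr fun i _ => ?_)).mul
      (isUnit_det_of_right_inverse hV)
    exact_mod_cast (hd i).ne'
  obtain rfl : P = U1 * B := by rw [hSVD, Matrix.mul_assoc]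
  have hGram : IsUnit ((U1 * B)ᴴ * (U1 * B)).det := by
    rw [conjTranspose_mul_self_mul_right hU1, det_mul, det_conjTranspose]
    exact hB.star.mul hB
  rw [← realRep, ← map_re_rangeProj _ hGram, rangeProj_mul hU1 hB, eq_sub_of_add_eq hUU,
    Matrix.map_sub _ Complex.sub_re, Matrix.map_one _ Complex.zero_re Complex.one_re,
    sub_sub_cancel, transpose_fromCols, fromCols_mul_fromRows, map_re_mul_conjTranspose]

/-- For a full-column-rank complex matrix `P` with SVD `P = U₁ Σ Vᴴ`
(`[U₁ U₂]` unitary, `Σ` positive diagonal, `V` unitary), the real projector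
identity `I − [Pr −Pj] (MᵀM)⁻¹ [Pr −Pj]ᵀ = [U₂r U₂j][U₂r U₂j]ᵀ` holds, where
`M = [[Pr, −Pj],[Pj, Pr]]`. -/
theorem stmt_10 {m n k : ℕ} (P : Matrix (Fin m) (Fin n) ℂ)
    (hFCR : Function.Injective P.mulVec)
    (U1 : Matrix (Fin m) (Fin n) ℂ) (U2 : Matrix (Fin m) (Fin k) ℂ)
    (hU : Matrix.fromCols U1 U2 * (Matrix.fromCols U1 U2)ᴴ = 1)
    (hU' : (Matrix.fromCols U1 U2)ᴴ * Matrix.fromCols U1 U2 = 1)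
    (d : Fin n → ℝ) (hd : ∀ i, 0 < d i)
    (V : Matrix (Fin n) (Fin n) ℂ) (hV : Vᴴ * V = 1) (hV' : V * Vᴴ = 1)
    (hSVD : P = U1 * Matrix.diagonal (fun i => (d i : ℂ)) * Vᴴ)
    (Pr Pj : Matrix (Fin m) (Fin n) ℝ)
    (hP : ∀ i j, P i j = ⟨Pr i j, Pj i j⟩)
    (U2r U2j : Matrix (Fin m) (Fin k) ℝ)
    (hU2 : ∀ i j, U2 i j = ⟨U2r i j, U2j i j⟩) :
    (1 : Matrix (Fin m) (Fin m) ℝ) -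
        Matrix.fromCols Pr (-Pj) *
          ((Matrix.fromBlocks Pr (-Pj) Pj Pr)ᵀ *
              Matrix.fromBlocks Pr (-Pj) Pj Pr)⁻¹ *
          (Matrix.fromCols Pr (-Pj))ᵀ =
      Matrix.fromCols U2r U2j * (Matrix.fromCols U2r U2j)ᵀ :=
  stmt_10_general P U1 U2 hU hU' d hd V hV hSVD Pr Pj hP U2r U2j hU2
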